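/- arXiv:2505.24662 — 9 statements merged into one kernel-verified Lean document; each statement's English description precedes it below -/
import Mathlib

section
/- Let G be a group, I a finite index set, and (G_i)_{i∈I} a family of subgroups of G. For J ⊆ I write G_J = ⋂_{j∈J} G_j (with G_∅ = G). If for every choice of subsets J, H, K ⊆ I and elements f, g, h ∈ G, pairwise nonempty intersection of the cosets fG_J, gG_H, hG_K implies fG_J ∩ gG_H ∩ hG_K ≠ ∅, then for every J, H, K ⊆ I one has (G_J ∩ G_H)(G_J ∩ G_K) = G_J ∩ (G_H G_K). -/
open scoped Pointwise

/-- If pairwise nonempty intersection of three cosets of parabolic subgroups implies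
nonempty triple intersection, then `(G_J ∩ G_H)(G_J ∩ G_K) = G_J ∩ (G_H G_K)`. -/
theorem stmt_0 {G : Type*} [Group G] {I : Type*} [Fintype I]
    (Gi : I → Subgroup G)
    (GJ : Set I → Subgroup G)
    (hGJ : ∀ J : Set I, GJ J = ⨅ j ∈ J, Gi j)
    (hFT : ∀ (J H K : Set I) (f g h : G),
      ((f • (GJ J : Set G)) ∩ (g • (GJ H : Set G))).Nonempty →
      ((f • (GJ J : Set G)) ∩ (h • (GJ K : Set G))).Nonempty →
      ((g • (GJ H : Set G)) ∩ (h • (GJ K : Set G))).Nonempty →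
      ((f • (GJ J : Set G)) ∩ (g • (GJ H : Set G)) ∩ (h • (GJ K : Set G))).Nonempty) :
    ∀ J H K : Set I,
      (((GJ J ⊓ GJ H : Subgroup G) : Set G) * ((GJ J ⊓ GJ K : Subgroup G) : Set G))
        = (GJ J : Set G) ∩ ((GJ H : Set G) * (GJ K : Set G)) := by

  intro J H K
  ext x
  simp only [Set.mem_mul, Set.mem_inter_iff, SetLike.mem_coe, Subgroup.mem_inf]
  constructor
  · rintro ⟨a, ⟨haJ, haH⟩, b, ⟨hbJ, hbK⟩, rfl⟩
    exact ⟨mul_mem haJ hbJ, a, haH, b, hbK, rfl⟩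
  · rintro ⟨hxJ, g, hg, h, hh, rfl⟩
    have h1 : (((1:G) • (GJ J : Set G)) ∩ ((1:G) • (GJ H : Set G))).Nonempty :=
      ⟨1, by simp [(GJ J).one_mem, (GJ H).one_mem]⟩
    have h2 : (((1:G) • (GJ J : Set G)) ∩ ((g*h) • (GJ K : Set G))).Nonempty := by
      refine ⟨g*h, ?_, ?_⟩
      · simpa using hxJ
      · rw [Set.mem_smul_set_iff_inv_smul_mem]
        simp only [smul_eq_mul, SetLike.mem_coe, mul_inv_rev]
        have : h⁻¹ * g⁻¹ * (g * h) = 1 := by group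
        rw [this]; exact (GJ K).one_mem
    have h3 : (((1:G) • (GJ H : Set G)) ∩ ((g*h) • (GJ K : Set G))).Nonempty := by
      refine ⟨g, ?_, ?_⟩
      · simpa using hg
      · simp only [Set.mem_smul_set_iff_inv_smul_mem, smul_eq_mul, mul_inv_rev]
        have : h⁻¹ * g⁻¹ * g = h⁻¹ := by group
        rw [this]
        exact inv_mem hh
    obtain ⟨y, ⟨hyJ, hyH⟩, hyK⟩ := hFT J H K 1 1 (g*h) h1 h2 h3
    simp only [one_smul, SetLike.mem_coe] at hyJ hyH
    rw [Set.mem_smul_set_iff_inv_smul_mem] at hyK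
    simp only [smul_eq_mul, SetLike.mem_coe] at hyK
    refine ⟨y, ⟨hyJ, hyH⟩, y⁻¹ * (g*h), ⟨mul_mem (inv_mem hyJ) hxJ, ?_⟩, by group⟩
    have := inv_mem hyK
    simpa [mul_assoc] using this
end

section
/- Let G be a group and (G_i)_{i∈I} a family of subgroups with G_J = ⋂_{j∈J} G_j. Suppose that for every J, H, K ⊆ I, (G_J ∩ G_H)(G_J ∩ G_K) = G_J ∩ (G_H G_K). Then for every J, H, K ⊆ I, (G_J G_H) ∩ (G_J G_K) = G_J (G_H ∩ G_K). -/
open scoped Pointwise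

/-- If `(G_J ∩ G_H)(G_J ∩ G_K) = G_J ∩ (G_H G_K)` for all `J, H, K ⊆ I`, then
`(G_J G_H) ∩ (G_J G_K) = G_J (G_H ∩ G_K)` for all `J, H, K ⊆ I`. -/
theorem stmt_1 {G : Type*} [Group G] {I : Type*}
    (Gi : I → Subgroup G)
    (GJ : Set I → Subgroup G)
    (hGJ : ∀ J : Set I, GJ J = ⨅ j ∈ J, Gi j)
    (hyp : ∀ J H K : Set I,
      (((GJ J ⊓ GJ H : Subgroup G) : Set G) * ((GJ J ⊓ GJ K : Subgroup G) : Set G))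
        = (GJ J : Set G) ∩ ((GJ H : Set G) * (GJ K : Set G))) :
    ∀ J H K : Set I,
      (((GJ J : Set G) * (GJ H : Set G)) ∩ ((GJ J : Set G) * (GJ K : Set G)))
        = (GJ J : Set G) * ((GJ H ⊓ GJ K : Subgroup G) : Set G) := by
  intro J H K
  ext x
  constructor
  · rintro ⟨⟨a, ha, b, hb, rfl⟩, c, hc, d, hd, heq⟩
    have hbmem : b ∈ (GJ H : Set G) ∩ ((GJ J : Set G) * (GJ K : Set G)) := by
      refine ⟨hb, a⁻¹ * c, mul_mem (inv_mem ha) hc, d, hd, ?_⟩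
      simp only at heq ⊢
      rw [mul_assoc, heq, ← mul_assoc, inv_mul_cancel, one_mul]
    rw [← hyp H J K] at hbmem
    obtain ⟨u, hu, v, hv, rfl⟩ := hbmem
    exact ⟨a * u, mul_mem ha hu.2, v, hv, by group⟩
  · rintro ⟨a, ha, v, hv, rfl⟩
    exact ⟨⟨a, ha, v, hv.1, rfl⟩, ⟨a, ha, v, hv.2, rfl⟩⟩
end

section
/- Let A and B be groups and G = A * B their free product. Let C_A, D_A ≤ A and C_B, D_B ≤ B, and let C ≤ G be the subgroup generated by C_A and C_B, and D ≤ G the subgroup generated by D_A and D_B. Then C ∩ D equals the subgroup of G generated by C_A ∩ D_A and C_B ∩ D_B. -/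
open scoped Monoid.Coprod

namespace FreeProdInf

open Monoid

variable {ι : Type*} [DecidableEq ι] {G : ι → Type*} [∀ i, Group (G i)]
  [∀ i, DecidableEq (G i)]

/-- All letters of the word lie in the family of subgroups `H`. -/
def Good (H : ∀ i, Subgroup (G i)) (w : CoprodI.Word G) : Prop :=
  ∀ (i : ι) (m : G i), (⟨i, m⟩ : Σ i, G i) ∈ w.toList → m ∈ H i

theorem good_smul (H : ∀ i, Subgroup (G i)) {i : ι} {m : G i} (hm : m ∈ H i)
    {w : CoprodI.Word G} (hw : Good H w) : Good H (CoprodI.of m • w) := by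
  intro j m₁ hmem
  rw [CoprodI.Word.mem_smul_iff] at hmem
  rcases hmem with ⟨_, h⟩ | ⟨_, hij, h⟩
  · exact hw _ _ h
  · subst hij
    rcases h with h | ⟨m', hm', rfl⟩ | ⟨_, rfl⟩
    · exact hw _ _ (List.mem_of_mem_tail h)
    · exact (H j).mul_mem hm (hw _ _ (List.mem_of_mem_head? hm'))
    · exact hm

theorem good_of_mem_iSup (H : ∀ i, Subgroup (G i)) {x : CoprodI G}
    (hx : x ∈ ⨆ i, (H i).map CoprodI.of) : Good H (CoprodI.Word.equiv x) := by
  have key : ∀ y ∈ ⨆ i, (H i).map (CoprodI.of : G _ →* CoprodI G),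
      ∀ w : CoprodI.Word G, Good H w → Good H (y • w) := by
    intro y hy
    rw [Subgroup.iSup_eq_closure, ← Subgroup.mem_toSubmonoid,
      Subgroup.closure_toSubmonoid] at hy
    refine Submonoid.closure_induction ?_ ?_ ?_ hy
    · rintro z hz w hw
      have : ∃ (i : ι) (m : G i), m ∈ H i ∧ z = CoprodI.of m := by
        rcases hz with hz | hz
        · rcases Set.mem_iUnion.1 hz with ⟨i, hz⟩
          rcases hz with ⟨m, hm, rfl⟩
          exact ⟨i, m, hm, rfl⟩
        · rcases Set.mem_iUnion.1 (Set.mem_inv.1 hz) with ⟨i, hz⟩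
          rcases hz with ⟨m, hm, hzm⟩
          exact ⟨i, m⁻¹, (H i).inv_mem hm, by rw [map_inv, hzm, inv_inv]⟩
      obtain ⟨i, m, hm, rfl⟩ := this
      exact good_smul H hm hw
    · intro w hw; rwa [one_smul]
    · intro a b _ _ ha hb w hw
      rw [mul_smul]; exact ha _ (hb _ hw)
  have h0 : Good H (CoprodI.Word.empty : CoprodI.Word G) := by
    intro i m hmem
    simp [CoprodI.Word.empty] at hmem
  exact key x hx _ h0

theorem prod_mem_of_good (H : ∀ i, Subgroup (G i)) {w : CoprodI.Word G} (hw : Good H w) :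
    w.prod ∈ ⨆ i, (H i).map (CoprodI.of : G _ →* CoprodI G) := by
  rw [CoprodI.Word.prod]
  refine list_prod_mem ?_
  intro x hx
  rcases List.mem_map.1 hx with ⟨⟨i, m⟩, hl, rfl⟩
  exact Subgroup.mem_iSup_of_mem i ⟨m, hw i m hl, rfl⟩

theorem iSup_inf_iSup (H K : ∀ i, Subgroup (G i)) :
    ((⨆ i, (H i).map (CoprodI.of : G _ →* CoprodI G)) ⊓
      ⨆ i, (K i).map (CoprodI.of : G _ →* CoprodI G)) =
    ⨆ i, (H i ⊓ K i).map (CoprodI.of : G _ →* CoprodI G) := by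
  refine le_antisymm ?_ ?_
  · intro x hx
    have hH := good_of_mem_iSup H hx.1
    have hK := good_of_mem_iSup K hx.2
    have hHK : Good (fun i => H i ⊓ K i) (CoprodI.Word.equiv x) :=
      fun i m hm => ⟨hH i m hm, hK i m hm⟩
    have h2 := prod_mem_of_good (fun i => H i ⊓ K i) hHK
    have h3 : (CoprodI.Word.equiv x).prod = x := CoprodI.Word.equiv.symm_apply_apply x
    rwa [h3] at h2
  · refine iSup_le fun i => le_inf ?_ ?_
    · exact le_trans (Subgroup.map_mono inf_le_left) (le_iSup (fun i => (H i).map _) i)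
    · exact le_trans (Subgroup.map_mono inf_le_right) (le_iSup (fun i => (K i).map _) i)

end FreeProdInf

section Transfer

open Monoid

universe u v

variable {A : Type u} {B : Type v} [Group A] [Group B]

/-- The two-indexed family of groups corresponding to `A ∗ B`. -/
abbrev GG (A : Type u) (B : Type v) : Bool → Type (max u v) :=
  fun b => cond b (ULift.{v} A) (ULift.{u} B)

instance : ∀ b, Group (GG A B b) := fun b => by cases b <;> dsimp [GG] <;> infer_instance

/-- `A ≃* GG A B true`. -/
def eA : A ≃* GG A B true := MulEquiv.ulift.symm

/-- `B ≃* GG A B false`. -/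
def eB : B ≃* GG A B false := MulEquiv.ulift.symm

/-- The canonical hom `A ∗ B →* CoprodI (GG A B)`. -/
def toCoprodI : A ∗ B →* CoprodI (GG A B) :=
  Coprod.lift ((CoprodI.of (M := GG A B) (i := true)).comp (eA (B := B)).toMonoidHom)
    ((CoprodI.of (M := GG A B) (i := false)).comp (eB (A := A)).toMonoidHom)

/-- The canonical hom `CoprodI (GG A B) →* A ∗ B`. -/
def ofCoprodI : CoprodI (GG A B) →* A ∗ B :=
  CoprodI.lift (fun b => Bool.rec (motive := fun b => GG A B b →* A ∗ B)
    (Coprod.inr.comp (eB (A := A)).symm.toMonoidHom)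
    (Coprod.inl.comp (eA (B := B)).symm.toMonoidHom) b)

theorem ofCoprodI_comp_toCoprodI :
    (ofCoprodI (A := A) (B := B)).comp toCoprodI = MonoidHom.id _ := by
  refine Coprod.hom_ext ?_ ?_ <;> ext x <;>
    · simp only [toCoprodI, MonoidHom.comp_apply, Coprod.lift_apply_inl, Coprod.lift_apply_inr,
        MonoidHom.id_apply, MulEquiv.coe_toMonoidHom]
      rw [ofCoprodI, CoprodI.lift_of]
      simp

theorem toCoprodI_injective : Function.Injective (toCoprodI (A := A) (B := B)) := by
  intro x y h
  have := congrArg (ofCoprodI (A := A) (B := B)) h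
  simpa [← MonoidHom.comp_apply, ofCoprodI_comp_toCoprodI] using this

theorem toCoprodI_comp_inl :
    (toCoprodI (A := A) (B := B)).comp Coprod.inl
      = (CoprodI.of (M := GG A B) (i := true)).comp (eA (B := B)).toMonoidHom :=
  Coprod.lift_comp_inl _ _

theorem toCoprodI_comp_inr :
    (toCoprodI (A := A) (B := B)).comp Coprod.inr
      = (CoprodI.of (M := GG A B) (i := false)).comp (eB (A := A)).toMonoidHom :=
  Coprod.lift_comp_inr _ _

end Transfer

/-- In a free product `A ∗ B`, the intersection of two special subgroups
`⟨C_A, C_B⟩` and `⟨D_A, D_B⟩` is the special subgroup `⟨C_A ∩ D_A, C_B ∩ D_B⟩`. -/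
theorem stmt_2 {A B : Type*} [Group A] [Group B]
    (CA DA : Subgroup A) (CB DB : Subgroup B) :
    ((CA.map (Monoid.Coprod.inl : A →* A ∗ B) ⊔ CB.map (Monoid.Coprod.inr : B →* A ∗ B))
        ⊓ (DA.map Monoid.Coprod.inl ⊔ DB.map Monoid.Coprod.inr))
      = ((CA ⊓ DA).map (Monoid.Coprod.inl : A →* A ∗ B)
          ⊔ (CB ⊓ DB).map (Monoid.Coprod.inr : B →* A ∗ B)) := by
  classical
  apply Subgroup.map_injective (toCoprodI_injective (A := A) (B := B))
  rw [Subgroup.map_inf _ _ _ (toCoprodI_injective), Subgroup.map_sup, Subgroup.map_sup,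
    Subgroup.map_sup]
  simp only [Subgroup.map_map, toCoprodI_comp_inl, toCoprodI_comp_inr]
  simp only [← Subgroup.map_map]
  rw [Subgroup.map_inf CA DA _ (eA (B := B)).injective,
    Subgroup.map_inf CB DB _ (eB (A := A)).injective]
  have key := FreeProdInf.iSup_inf_iSup (G := GG A B)
    (fun b => Bool.rec (motive := fun b => Subgroup (GG A B b))
      (CB.map (eB (A := A)).toMonoidHom) (CA.map (eA (B := B)).toMonoidHom) b)
    (fun b => Bool.rec (motive := fun b => Subgroup (GG A B b))
      (DB.map (eB (A := A)).toMonoidHom) (DA.map (eA (B := B)).toMonoidHom) b)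
  rw [iSup_bool_eq, iSup_bool_eq, iSup_bool_eq] at key
  exact key
end

section
/- Let G = A * B be a free product and let C, D, E ≤ G be special subgroups, i.e. C = ⟨C_A, C_B⟩, D = ⟨D_A, D_B⟩, E = ⟨E_A, E_B⟩ with C_A, D_A, E_A ≤ A and C_B, D_B, E_B ≤ B. If C_A D_A ∩ C_A E_A = C_A (D_A ∩ E_A) (as subsets of A) and C_B D_B ∩ C_B E_B = C_B (D_B ∩ E_B) (as subsets of B), then CD ∩ CE = C(D ∩ E) as subsets of G. -/
open scoped Monoid.Coprod Pointwise

/-!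
Left multiplication by a letter of `C` preserves the shape "letters of `C`, one letter of
`C_i D_i`, letters of `D`" of a reduced word, so the reduced word of every element of `CD` has
this shape. The reduced word of `g ∈ CD ∩ CE` then has it both for `D` and for `E`; at the later
of the two junctions the letter lies in `C_i D_i ∩ C_i E_i = C_i (D_i ∩ E_i)`, so the word has
the shape for `D ∩ E` and `g ∈ C (D ∩ E)`.
-/

namespace Monoid.CoprodI

variable {ι : Type*} {M : ι → Type*} [∀ i, Group (M i)]

def specialSubgroup (H : ∀ i, Subgroup (M i)) : Subgroup (CoprodI M) :=
  ⨆ i, (H i).map of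

/-- The shape of the reduced words of elements of `specialSubgroup C * specialSubgroup D`:
letters of `C`, then one letter of `C i * D i`, then letters of `D`. -/
inductive Splits (C D : ∀ i, Subgroup (M i)) : List (Σ i, M i) → Prop
  | nil : Splits C D []
  | cons_left {a : Σ i, M i} {l : List (Σ i, M i)} :
      a.2 ∈ C a.1 → Splits C D l → Splits C D (a :: l)
  | cons_junction {a : Σ i, M i} {l : List (Σ i, M i)} :
      a.2 ∈ (C a.1 : Set (M a.1)) * D a.1 → (∀ b ∈ l, b.2 ∈ D b.1) → Splits C D (a :: l)

namespace Splits

variable {C D E : ∀ i, Subgroup (M i)}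

theorem of_forall_mem {l : List (Σ i, M i)} (h : ∀ a ∈ l, a.2 ∈ D a.1) : Splits C D l := by
  cases l with
  | nil => exact nil
  | cons a l =>
    refine cons_junction ⟨1, one_mem _, a.2, h a List.mem_cons_self, one_mul _⟩ ?_
    exact fun b hb => h b (List.mem_cons_of_mem a hb)

theorem forall_mem_of_self {l : List (Σ i, M i)} (h : Splits D D l) :
    ∀ a ∈ l, a.2 ∈ D a.1 := by
  induction h with
  | nil => simp
  | cons_left ha _ ih => exact List.forall_mem_cons.2 ⟨ha, ih⟩
  | @cons_junction a l ha hl =>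
    obtain ⟨d, hd, d', hd', had⟩ := ha
    exact List.forall_mem_cons.2 ⟨had ▸ mul_mem hd hd', hl⟩

theorem tail {a : Σ i, M i} {l : List (Σ i, M i)} (h : Splits C D (a :: l)) : Splits C D l := by
  cases h with
  | cons_left _ hl => exact hl
  | cons_junction _ hl => exact of_forall_mem hl

theorem mul_head {i : ι} {m x : M i} {l : List (Σ i, M i)} (hm : m ∈ C i)
    (h : Splits C D (⟨i, x⟩ :: l)) : Splits C D (⟨i, m * x⟩ :: l) := by
  cases h with
  | cons_left hx hl => exact cons_left (mul_mem hm hx) hl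
  | cons_junction hx hl =>
    change x ∈ (C i : Set (M i)) * D i at hx
    obtain ⟨c, hc, d, hd, hcd⟩ := hx
    refine cons_junction (show m * x ∈ (C i : Set (M i)) * D i from ?_) hl
    rw [← hcd, ← mul_assoc]
    exact Set.mul_mem_mul (mul_mem hm hc) hd

theorem inf
    (hmeet : ∀ i, (C i : Set (M i)) * D i ∩ ((C i : Set (M i)) * E i) ⊆
      C i * (D i ⊓ E i : Subgroup (M i)))
    {l : List (Σ i, M i)} (hD : Splits C D l) (hE : Splits C E l) :
    Splits C (fun i => D i ⊓ E i) l := by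
  induction l with
  | nil => exact nil
  | cons a l ih =>
    cases hD with
    | cons_left ha hlD =>
      cases hE with
      | cons_left _ hlE => exact cons_left ha (ih hlD hlE)
      | cons_junction _ hlE => exact cons_left ha (ih hlD (of_forall_mem hlE))
    | cons_junction haD hlD =>
      cases hE with
      | cons_left ha hlE => exact cons_left ha (ih (of_forall_mem hlD) hlE)
      | cons_junction haE hlE =>
        exact cons_junction (hmeet a.1 (Set.mem_inter haD haE)) fun b hb => ⟨hlD b hb, hlE b hb⟩

end Splits

theorem of_mem_specialSubgroup {H : ∀ i, Subgroup (M i)} {i : ι} {m : M i} (hm : m ∈ H i) :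
    of m ∈ specialSubgroup H :=
  Subgroup.mem_iSup_of_mem i (Subgroup.mem_map_of_mem of hm)

theorem list_prod_mem_specialSubgroup {H : ∀ i, Subgroup (M i)} {l : List (Σ i, M i)}
    (h : ∀ a ∈ l, a.2 ∈ H a.1) : (l.map fun a => of a.2).prod ∈ specialSubgroup H :=
  Subgroup.list_prod_mem _ <| by
    simpa only [List.forall_mem_map] using fun a ha => of_mem_specialSubgroup (h a ha)

theorem specialSubgroup_mono {H K : ∀ i, Subgroup (M i)} (h : H ≤ K) :
    specialSubgroup H ≤ specialSubgroup K :=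
  iSup_mono fun i => Subgroup.map_mono (h i)

variable {C D E : ∀ i, Subgroup (M i)}

theorem Splits.prod_mem {l : List (Σ i, M i)} (h : Splits C D l) :
    (l.map fun a => of a.2).prod ∈ (specialSubgroup C : Set (CoprodI M)) * specialSubgroup D := by
  induction h with
  | nil => exact ⟨1, one_mem _, 1, one_mem _, mul_one 1⟩
  | cons_left ha _ ih =>
    obtain ⟨c, hc, d, hd, hcd⟩ := ih
    refine ⟨of _ * c, mul_mem (of_mem_specialSubgroup ha) hc, d, hd, ?_⟩
    rw [List.map_cons, List.prod_cons, ← hcd]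
    exact mul_assoc _ _ _
  | cons_junction ha hl =>
    obtain ⟨c, hc, d, hd, hcd⟩ := ha
    refine ⟨of c, of_mem_specialSubgroup hc, of d * _,
      mul_mem (of_mem_specialSubgroup hd) (list_prod_mem_specialSubgroup hl), ?_⟩
    rw [List.map_cons, List.prod_cons, ← hcd, map_mul, mul_assoc]

section Word

variable [∀ i, DecidableEq (M i)]

theorem Word.toList_rcons {i : ι} (p : Word.Pair M i) :
    (Word.rcons p).toList =
      if p.head = 1 then p.tail.toList else ⟨i, p.head⟩ :: p.tail.toList := by
  rw [Word.rcons]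
  split_ifs <;> rfl

theorem Splits.ite_mul {i : ι} {m x : M i} {l : List (Σ i, M i)} (hm : m ∈ C i)
    (h : Splits C D (if x = 1 then l else ⟨i, x⟩ :: l)) :
    Splits C D (if m * x = 1 then l else ⟨i, m * x⟩ :: l) := by
  by_cases hx : x = 1
  · rw [if_pos hx] at h
    subst hx
    rw [mul_one]
    split_ifs
    exacts [h, Splits.cons_left hm h]
  · rw [if_neg hx] at h
    split_ifs
    exacts [h.tail, h.mul_head hm]

variable [DecidableEq ι]

theorem Splits.of_smul {i : ι} {m : M i} (hm : m ∈ C i) {w : Word M}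
    (h : Splits C D w.toList) : Splits C D (of m • w).toList := by
  have hw : Word.rcons (Word.equivPair i w) = w := by
    rw [← Word.equivPair_symm, Equiv.symm_apply_apply]
  rw [← hw, Word.toList_rcons] at h
  rw [Word.of_smul_def, Word.toList_rcons]
  exact h.ite_mul hm

theorem Splits.smul {g : CoprodI M} (hg : g ∈ specialSubgroup C) {w : Word M}
    (h : Splits C D w.toList) : Splits C D (g • w).toList := by
  refine Subgroup.iSup_induction _ (C := fun g => ∀ w : Word M, Splits C D w.toList →
    Splits C D (g • w).toList) hg ?_ (fun w h => by rwa [one_smul]) ?_ w h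
  · rintro i _ ⟨m, hm, rfl⟩ w h
    exact h.of_smul hm
  · intro x y hx hy w h
    rw [mul_smul]
    exact hx _ (hy w h)

theorem splits_equiv_of_mem_mul {g : CoprodI M}
    (hg : g ∈ (specialSubgroup C : Set (CoprodI M)) * specialSubgroup D) :
    Splits C D (Word.equiv g).toList := by
  obtain ⟨c, hc, d, hd, rfl⟩ := hg
  have hdD : Splits D D (d • Word.empty).toList := Splits.smul hd Splits.nil
  change Splits C D ((c * d) • Word.empty).toList
  rw [mul_smul]
  exact Splits.smul hc (.of_forall_mem hdD.forall_mem_of_self)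

end Word

theorem specialSubgroup_mul_inter_mul_subset
    (hmeet : ∀ i, (C i : Set (M i)) * D i ∩ ((C i : Set (M i)) * E i) ⊆
      C i * (D i ⊓ E i : Subgroup (M i))) :
    (specialSubgroup C : Set (CoprodI M)) * specialSubgroup D ∩
        ((specialSubgroup C : Set (CoprodI M)) * specialSubgroup E) ⊆
      specialSubgroup C * (specialSubgroup D ⊓ specialSubgroup E : Subgroup (CoprodI M)) := by
  classical
  rintro g ⟨hD, hE⟩
  have hDE := (splits_equiv_of_mem_mul hD).inf hmeet (splits_equiv_of_mem_mul hE)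
  rw [← Word.equiv.symm_apply_apply g]
  refine Set.mul_subset_mul_left ?_ hDE.prod_mem
  exact le_inf (specialSubgroup_mono fun i => inf_le_left)
    (specialSubgroup_mono fun i => inf_le_right)

end Monoid.CoprodI

theorem Subgroup.map_mul_inter_mul_subset_iff {G H : Type*} [Group G] [Group H] {f : G →* H}
    (hf : Function.Injective f) (C D E : Subgroup G) :
    ((C.map f : Set H) * D.map f ∩ ((C.map f : Set H) * E.map f) ⊆
        C.map f * (D.map f ⊓ E.map f : Subgroup H)) ↔
      (C : Set G) * D ∩ ((C : Set G) * E) ⊆ C * (D ⊓ E : Subgroup G) := by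
  simp only [← Subgroup.map_inf_eq D E f hf, Subgroup.coe_map, ← Set.image_mul,
    ← Set.image_inter hf, Set.image_subset_image_iff hf]

namespace Monoid.Coprod

universe u v

variable (A : Type u) (B : Type v) [Group A] [Group B]

/- Reduced words exist for `CoprodI`, not for `Coprod`, so `A ∗ B` is embedded into the free
product of this family; `ULift` puts `A` and `B` into a common universe. -/
abbrev boolFamily : Bool → Type (max u v) := fun b => cond b (ULift.{u} B) (ULift.{v} A)

instance : ∀ b, Group (boolFamily A B b)
  | false => inferInstanceAs (Group (ULift A))
  | true => inferInstanceAs (Group (ULift B))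

def toCoprodI : A ∗ B →* CoprodI (boolFamily A B) :=
  lift ((CoprodI.of (i := false)).comp MulEquiv.ulift.symm.toMonoidHom)
    ((CoprodI.of (i := true)).comp MulEquiv.ulift.symm.toMonoidHom)

def ofCoprodI : CoprodI (boolFamily A B) →* A ∗ B :=
  CoprodI.lift fun
    | false => inl.comp MulEquiv.ulift.toMonoidHom
    | true => inr.comp MulEquiv.ulift.toMonoidHom

theorem ofCoprodI_comp_toCoprodI : (ofCoprodI A B).comp (toCoprodI A B) = MonoidHom.id _ := by
  apply hom_ext <;> ext <;> simp [toCoprodI, ofCoprodI]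

theorem toCoprodI_injective : Function.Injective (toCoprodI A B) :=
  Function.LeftInverse.injective (DFunLike.congr_fun (ofCoprodI_comp_toCoprodI A B))

variable {A B}

def boolFamilySubgroup (HA : Subgroup A) (HB : Subgroup B) : ∀ b, Subgroup (boolFamily A B b)
  | false => HA.map MulEquiv.ulift.symm.toMonoidHom
  | true => HB.map MulEquiv.ulift.symm.toMonoidHom

theorem boolFamilySubgroup_mul_inter_mul_subset {CA DA EA : Subgroup A} {CB DB EB : Subgroup B}
    (hA : (CA : Set A) * DA ∩ ((CA : Set A) * EA) ⊆ CA * (DA ⊓ EA : Subgroup A))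
    (hB : (CB : Set B) * DB ∩ ((CB : Set B) * EB) ⊆ CB * (DB ⊓ EB : Subgroup B)) :
    ∀ b, (boolFamilySubgroup CA CB b : Set (boolFamily A B b)) * boolFamilySubgroup DA DB b ∩
        ((boolFamilySubgroup CA CB b : Set (boolFamily A B b)) * boolFamilySubgroup EA EB b) ⊆
      boolFamilySubgroup CA CB b *
        (boolFamilySubgroup DA DB b ⊓ boolFamilySubgroup EA EB b : Subgroup _)
  | false => (Subgroup.map_mul_inter_mul_subset_iff MulEquiv.ulift.symm.injective _ _ _).2 hA
  | true => (Subgroup.map_mul_inter_mul_subset_iff MulEquiv.ulift.symm.injective _ _ _).2 hB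

theorem map_toCoprodI (HA : Subgroup A) (HB : Subgroup B) :
    (HA.map inl ⊔ HB.map inr).map (toCoprodI A B) =
      CoprodI.specialSubgroup (boolFamilySubgroup HA HB) := by
  rw [Subgroup.map_sup, Subgroup.map_map, Subgroup.map_map, toCoprodI, lift_comp_inl,
    lift_comp_inr, CoprodI.specialSubgroup, iSup_bool_eq, sup_comm, ← Subgroup.map_map,
    ← Subgroup.map_map]
  rfl

end Monoid.Coprod

open Monoid Monoid.Coprod in
/-- In a free product `G = A ∗ B`, for special subgroups `C, D, E`, if
`C_A D_A ∩ C_A E_A = C_A (D_A ∩ E_A)` in `A` and `C_B D_B ∩ C_B E_B = C_B (D_B ∩ E_B)` in `B`,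
then `CD ∩ CE = C (D ∩ E)` in `G`. -/
theorem stmt_3 {A B : Type*} [Group A] [Group B]
    (CA DA EA : Subgroup A) (CB DB EB : Subgroup B)
    (C D E : Subgroup (A ∗ B))
    (hC : C = CA.map (Monoid.Coprod.inl : A →* A ∗ B)
        ⊔ CB.map (Monoid.Coprod.inr : B →* A ∗ B))
    (hD : D = DA.map Monoid.Coprod.inl ⊔ DB.map Monoid.Coprod.inr)
    (hE : E = EA.map Monoid.Coprod.inl ⊔ EB.map Monoid.Coprod.inr)
    (hA : ((CA : Set A) * (DA : Set A)) ∩ ((CA : Set A) * (EA : Set A))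
        = (CA : Set A) * ((DA ⊓ EA : Subgroup A) : Set A))
    (hB : ((CB : Set B) * (DB : Set B)) ∩ ((CB : Set B) * (EB : Set B))
        = (CB : Set B) * ((DB ⊓ EB : Subgroup B) : Set B)) :
    ((C : Set (A ∗ B)) * (D : Set (A ∗ B))) ∩ ((C : Set (A ∗ B)) * (E : Set (A ∗ B)))
      = (C : Set (A ∗ B)) * ((D ⊓ E : Subgroup (A ∗ B)) : Set (A ∗ B)) := by
  refine subset_antisymm ?_ Set.mul_inter_subset
  rw [← Subgroup.map_mul_inter_mul_subset_iff (toCoprodI_injective A B), hC, hD, hE,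
    map_toCoprodI, map_toCoprodI, map_toCoprodI]
  exact CoprodI.specialSubgroup_mul_inter_mul_subset
    (boolFamilySubgroup_mul_inter_mul_subset hA.le hB.le)
end

section
/- Let G = A * B be a free product, and suppose g ∈ G lies in A (viewed as a subgroup of G) and also g ∈ C·D where C = ⟨C_A, C_B⟩ and D = ⟨D_A, D_B⟩ are special subgroups (C_A, D_A ≤ A, C_B, D_B ≤ B). Then g ∈ C_A · D_A. -/
open scoped Monoid.Coprod Pointwise

/-- In a free product `G = A ∗ B`, if `g` lies in (the image of) `A` and also in the
setwise product `C·D` of two special subgroups `C = ⟨C_A, C_B⟩` and `D = ⟨D_A, D_B⟩`,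
then `g` lies in (the image of) `C_A · D_A`. -/
theorem stmt_4 {A B : Type*} [Group A] [Group B]
    (CA DA : Subgroup A) (CB DB : Subgroup B)
    (C D : Subgroup (A ∗ B))
    (hC : C = CA.map (Monoid.Coprod.inl : A →* A ∗ B)
        ⊔ CB.map (Monoid.Coprod.inr : B →* A ∗ B))
    (hD : D = DA.map Monoid.Coprod.inl ⊔ DB.map Monoid.Coprod.inr)
    (g : A ∗ B)
    (hgA : g ∈ (Monoid.Coprod.inl : A →* A ∗ B).range)
    (hgCD : g ∈ (C : Set (A ∗ B)) * (D : Set (A ∗ B))) :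
    g ∈ (Monoid.Coprod.inl : A →* A ∗ B) '' ((CA : Set A) * (DA : Set A)) := by
  -- the retraction onto A
  set f : A ∗ B →* A := Monoid.Coprod.lift (MonoidHom.id A) 1 with hf
  have hfl : ∀ a : A, f (Monoid.Coprod.inl a) = a := fun a => by
    simp [hf]
  have hfr : ∀ b : B, f (Monoid.Coprod.inr b) = 1 := fun b => by
    simp [hf]
  have hmapC : C.map f ≤ CA := by
    rw [hC, Subgroup.map_sup, sup_le_iff]
    constructor
    · rw [Subgroup.map_map]
      intro x hx
      obtain ⟨a, ha, rfl⟩ := hx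
      simpa [hfl a] using ha
    · rw [Subgroup.map_map]
      intro x hx
      obtain ⟨b, hb, rfl⟩ := hx
      exact (hfr b) ▸ one_mem _
  have hmapD : D.map f ≤ DA := by
    rw [hD, Subgroup.map_sup, sup_le_iff]
    constructor
    · rw [Subgroup.map_map]
      intro x hx
      obtain ⟨a, ha, rfl⟩ := hx
      simpa [hfl a] using ha
    · rw [Subgroup.map_map]
      intro x hx
      obtain ⟨b, hb, rfl⟩ := hx
      exact (hfr b) ▸ one_mem _
  obtain ⟨a, rfl⟩ := hgA
  obtain ⟨c, hc, d, hd, hcd⟩ := hgCD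
  refine ⟨a, ⟨f c, hmapC ⟨c, hc, rfl⟩, f d, hmapD ⟨d, hd, rfl⟩, ?_⟩, rfl⟩
  show f c * f d = a
  have hcd' : c * d = Monoid.Coprod.inl a := hcd
  rw [← map_mul, hcd', hfl]
end

section
/- Let W be a Coxeter group with Coxeter system (W, S), S = {r_1, ..., r_n}, and for J ⊆ {1,...,n} let W^(J) = ⟨r_j : j ∈ J⟩. Then for all J, K, L ⊆ {1,...,n}, (W^(J) W^(K)) ∩ (W^(J) W^(L)) = W^(J) (W^(K) ∩ W^(L)) as subsets of W. -/
/-!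
Write `x = a b = a' c` with `a, a' ∈ W_J`, `b ∈ W_K`, `c ∈ W_L`, so that `b` and `c` lie in
the same coset `W_J b`, and let `u` be an element of minimal length in it. Then
`ℓ (w u) = ℓ w + ℓ u` for all `w ∈ W_J`, so a left descent `s_j` (`j ∈ J`) of `w` is also
one of `w u`; by the exchange condition a left descent of an element of `W_K` can be
cancelled inside `W_K`. Peeling off `w` letter by letter gives `u ∈ W_K`, likewise
`u ∈ W_L`, and `x = (x u⁻¹) u`.

The exchange condition comes from Tits' sign representation of `W` on `W × ZMod 2`, where
`s_i` acts by `(t, ε) ↦ (s_i t s_i, ε + [t = s_i])`: it shows that the parity of the number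
of occurrences of `t` in the left inversion sequence of a word depends only on the element
the word represents.
-/

open scoped Pointwise

namespace CoxeterSystem

open List

variable {B W : Type*} [Group W] {M : CoxeterMatrix B} (cs : CoxeterSystem M W)

theorem count_leftInvSeq_cons [DecidableEq W] (i : B) (ω : List B) (t : W) :
    (cs.leftInvSeq (i :: ω)).count t =
      (cs.leftInvSeq ω).count (cs.simple i * t * cs.simple i) +
        if cs.simple i = t then 1 else 0 := by
  have ht : t = MulAut.conj (cs.simple i) (cs.simple i * t * cs.simple i) := by
    simp [mul_assoc]
  rw [leftInvSeq, count_cons, ht, count_map_of_injective _ _ (MulAut.conj _).injective]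
  simp only [beq_iff_eq, ← ht]

theorem wordProd_alternatingWord_two_mul (i j : B) :
    cs.wordProd (alternatingWord i j (2 * M i j)) = 1 := by
  simp [prod_alternatingWord_eq_mul_pow]

theorem drop_leftInvSeq_alternatingWord_two_mul (i j : B) :
    (cs.leftInvSeq (alternatingWord i j (2 * M i j))).drop (M i j) =
      (cs.leftInvSeq (alternatingWord i j (2 * M i j))).take (M i j) := by
  refine ext_getElem (by simp; omega) fun k h₁ h₂ => ?_
  simp only [length_drop, length_leftInvSeq, length_alternatingWord] at h₁
  rw [getElem_drop, getElem_take, getElem_leftInvSeq_alternatingWord _ _ _ _ _ (by omega),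
    getElem_leftInvSeq_alternatingWord _ _ _ _ _ (by omega), prod_alternatingWord_eq_mul_pow,
    prod_alternatingWord_eq_mul_pow]
  have hodd (n : ℕ) : ¬Even (2 * n + 1) := by simp [parity_simps]
  have hdiv (n : ℕ) : (2 * n + 1) / 2 = n := by omega
  simp only [if_neg (hodd _), hdiv, pow_add, simple_mul_simple_pow', one_mul]

theorem prod_map_alternatingWord_two_mul {G : Type*} [Monoid G] (f : B → G) (i j : B) (m : ℕ) :
    ((alternatingWord i j (2 * m)).map f).prod = (f i * f j) ^ m := by
  induction m with
  | zero => simp [alternatingWord]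
  | succ m ih =>
    rw [mul_add_one, alternatingWord_succ', alternatingWord_succ', if_neg (by simp [parity_simps]),
      if_pos (even_two_mul m), map_cons, map_cons, prod_cons, prod_cons, ih, pow_succ', mul_assoc]

section ParityRepresentation

variable [DecidableEq W]

def parityPerm (i : B) : Equiv.Perm (W × ZMod 2) :=
  Function.Involutive.toPerm
    (fun p => (cs.simple i * p.1 * cs.simple i, p.2 + if p.1 = cs.simple i then 1 else 0))
    (by
      rintro ⟨t, z⟩
      have hconj : cs.simple i * t * cs.simple i = cs.simple i ↔ t = cs.simple i := by
        constructor
        · intro h; simpa [mul_assoc] using congrArg (cs.simple i * · * cs.simple i) h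
        · rintro rfl; simp
      refine Prod.ext (by simp [mul_assoc]) ?_
      simp only [hconj, add_assoc]
      split_ifs <;> reduce_mod_char)

theorem prod_map_parityPerm_apply (ω : List B) (t : W) (z : ZMod 2) :
    (ω.map cs.parityPerm).prod ((cs.wordProd ω)⁻¹ * t * cs.wordProd ω, z) =
      (t, z + (cs.leftInvSeq ω).count t) := by
  induction ω generalizing t z with
  | nil => simp
  | cons i ω ih =>
    have h := ih (cs.simple i * t * cs.simple i) z
    simp only [wordProd_cons, mul_inv_rev, inv_simple, mul_assoc] at h ⊢
    rw [map_cons, prod_cons, Equiv.Perm.mul_apply, h, count_leftInvSeq_cons]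
    simp [parityPerm, mul_assoc, add_assoc, eq_comm, mul_eq_one_iff_eq_inv]

theorem isLiftable_parityPerm : M.IsLiftable cs.parityPerm := by
  intro i j
  rw [← prod_map_alternatingWord_two_mul]
  ext ⟨t, z⟩ : 1
  have h := cs.prod_map_parityPerm_apply (alternatingWord i j (2 * M i j)) t z
  have heven : ((cs.leftInvSeq (alternatingWord i j (2 * M i j))).count t : ZMod 2) = 0 := by
    rw [← take_append_drop (M i j) (cs.leftInvSeq _), count_append,
      drop_leftInvSeq_alternatingWord_two_mul, ← two_mul, Nat.cast_mul]
    exact mul_eq_zero_of_left (by decide) _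
  simpa [wordProd_alternatingWord_two_mul, heven] using h

theorem count_leftInvSeq_congr {ω ω' : List B} (h : cs.wordProd ω = cs.wordProd ω') (t : W) :
    ((cs.leftInvSeq ω).count t : ZMod 2) = (cs.leftInvSeq ω').count t := by
  set φ := cs.lift ⟨_, cs.isLiftable_parityPerm⟩
  have hφ (ω : List B) : φ (cs.wordProd ω) = (ω.map cs.parityPerm).prod := by
    rw [wordProd, map_list_prod, map_map]
    exact congrArg prod (map_congr_left fun i _ => cs.lift_apply_simple _ i)
  have hcount (ω : List B) : ((cs.leftInvSeq ω).count t : ZMod 2) =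
      (φ (cs.wordProd ω) ((cs.wordProd ω)⁻¹ * t * cs.wordProd ω, 0)).2 := by
    simp [hφ, prod_map_parityPerm_apply]
  rw [hcount ω, hcount ω', h]

end ParityRepresentation

theorem simple_mem_leftInvSeq_of_isLeftDescent {ω : List B} {i : B}
    (hi : cs.IsLeftDescent (cs.wordProd ω) i) : cs.simple i ∈ cs.leftInvSeq ω := by
  classical
  obtain ⟨ω', hω', hω'eq⟩ := cs.exists_isReduced (cs.simple i * cs.wordProd ω)
  have hnot : cs.simple i ∉ cs.leftInvSeq ω' := fun hmem => by
    have := (cs.isLeftInversion_of_mem_leftInvSeq hω' hmem).2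
    rw [← hω'eq, simple_mul_simple_cancel_left] at this
    exact lt_asymm hi this
  have hprod : cs.wordProd (i :: ω') = cs.wordProd ω := by
    rw [wordProd_cons, ← hω'eq, simple_mul_simple_cancel_left]
  have hodd : ((cs.leftInvSeq ω).count (cs.simple i) : ZMod 2) = 1 := by
    rw [← cs.count_leftInvSeq_congr hprod, count_leftInvSeq_cons, simple_mul_simple_cancel_right,
      count_eq_zero_of_not_mem hnot]
    simp
  refine count_pos_iff.mp (Nat.pos_of_ne_zero fun h0 => ?_)
  simp [h0] at hodd

theorem exists_eraseIdx_of_isLeftDescent {ω : List B} {i : B}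
    (hi : cs.IsLeftDescent (cs.wordProd ω) i) :
    ∃ k < ω.length, cs.simple i * cs.wordProd ω = cs.wordProd (ω.eraseIdx k) := by
  obtain ⟨k, hk, hki⟩ := mem_iff_getElem.mp (cs.simple_mem_leftInvSeq_of_isLeftDescent hi)
  rw [length_leftInvSeq] at hk
  refine ⟨k, hk, ?_⟩
  rw [← getD_leftInvSeq_mul_wordProd, getD_eq_getElem _ _ (by simpa using hk), hki]

theorem exists_isReduced_sublist (ω : List B) :
    ∃ κ, κ <+ ω ∧ cs.IsReduced κ ∧ cs.wordProd κ = cs.wordProd ω := by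
  induction ω with
  | nil => exact ⟨[], Sublist.slnil, by simp [IsReduced], rfl⟩
  | cons i ω ih =>
    obtain ⟨κ, hκω, hκ, hκeq⟩ := ih
    rcases cs.length_simple_mul (cs.wordProd κ) i with hlen | hlen
    · refine ⟨i :: κ, hκω.cons_cons i, ?_, by rw [wordProd_cons, wordProd_cons, hκeq]⟩
      rw [IsReduced, wordProd_cons, hlen, hκ, length_cons]
    · have hi : cs.IsLeftDescent (cs.wordProd κ) i := by
        rw [IsLeftDescent]; omega
      obtain ⟨k, hk, hke⟩ := cs.exists_eraseIdx_of_isLeftDescent hi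
      refine ⟨κ.eraseIdx k, ((eraseIdx_sublist κ k).trans hκω).cons i, ?_, ?_⟩
      · have := length_eraseIdx_add_one hk
        rw [IsReduced] at hκ ⊢
        rw [← hke]
        omega
      · rw [← hke, hκeq, wordProd_cons]

def parabolic (J : Set B) : Subgroup W :=
  Subgroup.closure (cs.simple '' J)

section Parabolic

variable {J : Set B}

theorem simple_mem_parabolic {i : B} (hi : i ∈ J) : cs.simple i ∈ cs.parabolic J :=
  Subgroup.subset_closure ⟨i, hi, rfl⟩

theorem wordProd_mem_parabolic {ω : List B} (hω : ∀ i ∈ ω, i ∈ J) :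
    cs.wordProd ω ∈ cs.parabolic J :=
  Subgroup.list_prod_mem _ (forall_mem_map.mpr fun i hi => cs.simple_mem_parabolic (hω i hi))

theorem exists_wordProd_eq_of_mem_parabolic {w : W} (hw : w ∈ cs.parabolic J) :
    ∃ ω : List B, (∀ i ∈ ω, i ∈ J) ∧ cs.wordProd ω = w := by
  induction hw using Subgroup.closure_induction with
  | mem x hx =>
    obtain ⟨i, hi, rfl⟩ := hx
    exact ⟨[i], by simpa using hi, wordProd_singleton cs i⟩
  | one => exact ⟨[], by simp, wordProd_nil cs⟩
  | mul x y _ _ hx hy =>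
    obtain ⟨ω₁, h₁, rfl⟩ := hx
    obtain ⟨ω₂, h₂, rfl⟩ := hy
    exact ⟨ω₁ ++ ω₂, fun i hi => (mem_append.mp hi).elim (h₁ i) (h₂ i),
      wordProd_append cs ω₁ ω₂⟩
  | inv x _ hx =>
    obtain ⟨ω, h, rfl⟩ := hx
    exact ⟨ω.reverse, by simpa using h, wordProd_reverse cs ω⟩

theorem exists_isReduced_of_mem_parabolic {w : W} (hw : w ∈ cs.parabolic J) :
    ∃ ω : List B, cs.IsReduced ω ∧ (∀ i ∈ ω, i ∈ J) ∧ cs.wordProd ω = w := by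
  obtain ⟨ω, hωJ, rfl⟩ := cs.exists_wordProd_eq_of_mem_parabolic hw
  obtain ⟨κ, hκω, hκ, hκeq⟩ := cs.exists_isReduced_sublist ω
  exact ⟨κ, hκ, fun i hi => hωJ i (hκω.subset hi), hκeq⟩

theorem exists_isLeftDescent_of_mem_parabolic {w : W} (hw : w ∈ cs.parabolic J) (h1 : w ≠ 1) :
    ∃ j ∈ J, cs.IsLeftDescent w j := by
  obtain ⟨_ | ⟨j, ω⟩, hω, hωJ, rfl⟩ := cs.exists_isReduced_of_mem_parabolic hw
  · exact absurd (wordProd_nil cs) h1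
  · refine ⟨j, hωJ j mem_cons_self, ?_⟩
    have := cs.length_wordProd_le ω
    rw [IsLeftDescent, wordProd_cons, simple_mul_simple_cancel_left, ← wordProd_cons, hω,
      length_cons]
    omega

theorem simple_mul_mem_parabolic_of_isLeftDescent {w : W} (hw : w ∈ cs.parabolic J) {i : B}
    (hi : cs.IsLeftDescent w i) : cs.simple i * w ∈ cs.parabolic J := by
  obtain ⟨ω, -, hωJ, rfl⟩ := cs.exists_isReduced_of_mem_parabolic hw
  obtain ⟨k, -, hk⟩ := cs.exists_eraseIdx_of_isLeftDescent hi
  rw [hk]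
  exact cs.wordProd_mem_parabolic fun j hj => hωJ j ((eraseIdx_sublist ω k).subset hj)

end Parabolic

theorem isLeftDescent_or_exists_of_isLeftDescent_mul {v u : W} {i : B}
    (hi : cs.IsLeftDescent (v * u) i) :
    cs.IsLeftDescent v i ∨
      ∃ u', cs.length u' < cs.length u ∧ cs.simple i * (v * u) = v * u' := by
  obtain ⟨α, hα, rfl⟩ := cs.exists_isReduced v
  obtain ⟨γ, hγ, rfl⟩ := cs.exists_isReduced u
  rw [← wordProd_append] at hi
  obtain ⟨k, hk, hke⟩ := cs.exists_eraseIdx_of_isLeftDescent hi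
  rw [wordProd_append] at hke
  rcases lt_or_ge k α.length with hkα | hkα
  · left
    rw [eraseIdx_append_of_lt_length hkα, wordProd_append, ← mul_assoc] at hke
    have h₁ := mul_right_cancel hke
    have h₂ := length_eraseIdx_add_one hkα
    have h₃ := cs.length_wordProd_le (α.eraseIdx k)
    rw [IsLeftDescent, h₁, hα]
    omega
  · right
    rw [eraseIdx_append_of_length_le hkα, wordProd_append] at hke
    refine ⟨_, ?_, hke⟩
    have h₂ := length_eraseIdx_add_one (l := γ) (i := k - α.length)
      (by simp only [length_append] at hk; omega)
    have h₃ := cs.length_wordProd_le (γ.eraseIdx (k - α.length))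
    rw [IsReduced] at hγ
    omega

def IsMinimalCosetRep (J : Set B) (u : W) : Prop :=
  ∀ w ∈ cs.parabolic J, cs.length u ≤ cs.length (w * u)

theorem exists_isMinimalCosetRep (J : Set B) (b : W) :
    ∃ w ∈ cs.parabolic J, cs.IsMinimalCosetRep J (w * b) := by
  obtain ⟨w, hw, hmin⟩ := (InvImage.wf (fun w => cs.length (w * b)) wellFounded_lt).has_min
    (cs.parabolic J : Set W) ⟨1, one_mem _⟩
  refine ⟨w, hw, fun w' hw' => not_lt.mp ?_⟩
  simpa [InvImage, mul_assoc] using hmin (w' * w) (mul_mem hw' hw)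

namespace IsMinimalCosetRep

variable {cs} {J : Set B} {u : W}

theorem length_mul (hu : cs.IsMinimalCosetRep J u) {w : W} (hw : w ∈ cs.parabolic J) :
    cs.length (w * u) = cs.length w + cs.length u := by
  induction hlen : cs.length w generalizing w with
  | zero => simp [cs.length_eq_zero_iff.mp hlen]
  | succ n ih =>
    obtain ⟨j, hj, hjw⟩ :=
      cs.exists_isLeftDescent_of_mem_parabolic hw (by rintro rfl; simp at hlen)
    obtain ⟨w', rfl⟩ : ∃ w', w = cs.simple j * w' := ⟨cs.simple j * w, by simp⟩
    have hw' : w' ∈ cs.parabolic J := by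
      simpa using mul_mem (cs.simple_mem_parabolic hj) hw
    rw [IsLeftDescent, simple_mul_simple_cancel_left] at hjw
    have hj' := cs.length_simple_mul w' j
    have ih' := ih hw' (by omega)
    have hnd : ¬cs.IsLeftDescent (w' * u) j := by
      intro h
      rcases cs.isLeftDescent_or_exists_of_isLeftDescent_mul h with h | ⟨u', hu', hu'eq⟩
      · rw [IsLeftDescent] at h
        omega
      · have hu'coset : w'⁻¹ * cs.simple j * w' * u = u' := by
          calc w'⁻¹ * cs.simple j * w' * u = w'⁻¹ * (cs.simple j * (w' * u)) := by group
            _ = u' := by rw [hu'eq, inv_mul_cancel_left]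
        have := hu _ (mul_mem (mul_mem (inv_mem hw') (cs.simple_mem_parabolic hj)) hw')
        rw [hu'coset] at this
        omega
    rw [mul_assoc, cs.not_isLeftDescent_iff.mp hnd]
    omega

theorem mem_parabolic (hu : cs.IsMinimalCosetRep J u) {K : Set B} {w : W}
    (hw : w ∈ cs.parabolic J) (hwu : w * u ∈ cs.parabolic K) : u ∈ cs.parabolic K := by
  induction hlen : cs.length w generalizing w with
  | zero => rwa [cs.length_eq_zero_iff.mp hlen, one_mul] at hwu
  | succ n ih =>
    obtain ⟨j, hj, hjw⟩ :=
      cs.exists_isLeftDescent_of_mem_parabolic hw (by rintro rfl; simp at hlen)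
    have hw' : cs.simple j * w ∈ cs.parabolic J := mul_mem (cs.simple_mem_parabolic hj) hw
    have hjwu : cs.IsLeftDescent (w * u) j := by
      rw [IsLeftDescent, ← mul_assoc, hu.length_mul hw', hu.length_mul hw]
      exact Nat.add_lt_add_right hjw _
    refine ih hw' ?_ (by have := cs.isLeftDescent_iff.mp hjw; omega)
    rw [mul_assoc]
    exact cs.simple_mul_mem_parabolic_of_isLeftDescent hwu hjwu

end IsMinimalCosetRep

theorem parabolic_mul_inter_parabolic_mul (J K L : Set B) :
    ((cs.parabolic J : Set W) * cs.parabolic K) ∩ ((cs.parabolic J : Set W) * cs.parabolic L) =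
      (cs.parabolic J : Set W) * (cs.parabolic K ⊓ cs.parabolic L : Subgroup W) := by
  ext x
  constructor
  · rintro ⟨⟨a, ha, b, hb, rfl⟩, a', ha', c, hc, hx⟩
    obtain ⟨w, hw, hu⟩ := cs.exists_isMinimalCosetRep J b
    have hcb : c = a'⁻¹ * a * w⁻¹ * (w * b) := by
      rw [← inv_mul_cancel_left a' c, show a' * c = a * b from hx]
      group
    refine ⟨a * w⁻¹, mul_mem ha (inv_mem hw), w * b, ⟨?_, ?_⟩, by group⟩
    · exact hu.mem_parabolic (inv_mem hw) (by simpa using hb)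
    · exact hu.mem_parabolic (mul_mem (mul_mem (inv_mem ha') ha) (inv_mem hw)) (hcb ▸ hc)
  · rintro ⟨a, ha, v, hv, rfl⟩
    exact ⟨⟨a, ha, v, hv.1, rfl⟩, a, ha, v, hv.2, rfl⟩

end CoxeterSystem

/-- For a Coxeter system `(W, S)` with `S = {r_1, ..., r_n}` and standard parabolic
subgroups `W^(J) = ⟨r_j : j ∈ J⟩`, one has
`(W^(J) W^(K)) ∩ (W^(J) W^(L)) = W^(J) (W^(K) ∩ W^(L))` for all `J, K, L`. -/
theorem stmt_5 {n : ℕ} {W : Type*} [Group W]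
    (M : CoxeterMatrix (Fin n)) (cs : CoxeterSystem M W)
    (P : Set (Fin n) → Subgroup W)
    (hP : ∀ J, P J = Subgroup.closure (cs.simple '' J)) :
    ∀ J K L : Set (Fin n),
      (((P J : Set W) * (P K : Set W)) ∩ ((P J : Set W) * (P L : Set W)))
        = (P J : Set W) * ((P K ⊓ P L : Subgroup W) : Set W) := by
  intro J K L
  simp only [hP]
  exact cs.parabolic_mul_inter_parabolic_mul J K L
end

section
/- Let (G_i)_{i∈I} be a family of subgroups of a group G over a finite set I, with G_J = ⋂_{j∈J} G_j, G^i = G_{I∖{i}}, and G^J = ⟨G^i : i ∈ J⟩. Suppose for every J ⊆ I that G^J = G_{I∖J}. Then for every J ⊂ I with |I∖J| ≥ 2 and all distinct i, k ∈ I ∖ J, one has G_J = ⟨G_{J∪{i}}, G_{J∪{k}}⟩. -/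
/-- If `G^J = G_{I∖J}` for every `J ⊆ I` (with `G^i = G_{I∖{i}}` and
`G^J = ⟨G^i : i ∈ J⟩`), then for every `J ⊂ I` with `|I∖J| ≥ 2` and all distinct
`i, k ∈ I∖J`, one has `G_J = ⟨G_{J∪{i}}, G_{J∪{k}}⟩`. -/
theorem stmt_9 {G I : Type*} [Group G] [Fintype I] [DecidableEq I]
    (Gi : I → Subgroup G)
    (GJ : Finset I → Subgroup G)
    (hGJ : ∀ J : Finset I, GJ J = ⨅ j ∈ J, Gi j)
    (hyp : ∀ J : Finset I, (⨆ i ∈ J, GJ ({i}ᶜ)) = GJ (Jᶜ)) :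
    ∀ J : Finset I, 2 ≤ Jᶜ.card → ∀ i ∈ Jᶜ, ∀ k ∈ Jᶜ, i ≠ k →
      GJ J = GJ (insert i J) ⊔ GJ (insert k J) := by
  intro J _ i hi k hk hik
  have hiJ : i ∉ J := Finset.mem_compl.mp hi
  have hkJ : k ∉ J := Finset.mem_compl.mp hk
  have e1 : (Jᶜ \ {i})ᶜ = insert i J := by
    ext x
    simp only [Finset.mem_compl, Finset.mem_sdiff, Finset.mem_singleton,
      Finset.mem_insert]
    by_cases hx : x = i <;> simp [hx, hiJ] <;> tauto
  have e2 : (Jᶜ \ {k})ᶜ = insert k J := by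
    ext x
    simp only [Finset.mem_compl, Finset.mem_sdiff, Finset.mem_singleton,
      Finset.mem_insert]
    by_cases hx : x = k <;> simp [hx, hkJ] <;> tauto
  have hcover : Jᶜ = (Jᶜ \ {i}) ∪ (Jᶜ \ {k}) := by
    ext x
    simp only [Finset.mem_union, Finset.mem_sdiff, Finset.mem_singleton]
    constructor
    · intro hx
      by_cases hxi : x = i
      · exact Or.inr ⟨hx, by simp [hxi, hik]⟩
      · exact Or.inl ⟨hx, hxi⟩
    · rintro (⟨hx, _⟩ | ⟨hx, _⟩) <;> exact hx
  have key : GJ J = ⨆ m ∈ Jᶜ, GJ ({m}ᶜ) := by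
    rw [hyp Jᶜ, compl_compl]
  rw [key, hcover]
  rw [show ((⨆ m ∈ (Jᶜ \ {i}) ∪ (Jᶜ \ {k}), GJ ({m}ᶜ)) =
      (⨆ m ∈ (Jᶜ \ {i}), GJ ({m}ᶜ)) ⊔ (⨆ m ∈ (Jᶜ \ {k}), GJ ({m}ᶜ))) by
    simp only [Finset.mem_union, iSup_or, iSup_sup_eq]]
  rw [hyp, hyp, e1, e2]
end

section
/- Let A, B be groups, and let α = (A, (A_i)_{i∈I_α}), β = (B, (B_i)_{i∈I_β}) be families of subgroups over disjoint finite index sets. In G = A * B define, for i ∈ I_α, G_i = ⟨A_i, B⟩ and for i ∈ I_β, G_i = ⟨A, B_i⟩. Then for every J ⊆ I_α ⊔ I_β, ⋂_{j∈J} G_j = ⟨A_{J∩I_α}, B_{J∩I_β}⟩, where A_K = ⋂_{k∈K} A_k and B_K = ⋂_{k∈K} B_k (with A_∅ = A, B_∅ = B). -/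
open scoped Monoid.Coprod

namespace Stmt10Aux

open Monoid Monoid.CoprodI

section CoprodI

variable {ι : Type*} {G : ι → Type*} [∀ i, Group (G i)]
variable [DecidableEq ι] [∀ i, DecidableEq (G i)]

theorem letters_step (H : ∀ i, Subgroup (G i)) {i : ι} {m : G i} (hm : m ∈ H i)
    {w : Word G} (hw : ∀ l ∈ w.toList, l.2 ∈ H l.1) :
    ∀ l ∈ ((of m) • w).toList, l.2 ∈ H l.1 := by
  rintro ⟨j, m₁⟩ hl
  rw [Word.mem_smul_iff] at hl
  rcases hl with ⟨_, h⟩ | ⟨_, rfl, h | ⟨m', hm', rfl⟩ | ⟨-, rfl⟩⟩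
  · exact hw _ h
  · exact hw _ (List.mem_of_mem_tail h)
  · exact mul_mem hm (hw _ (List.mem_of_mem_head? hm'))
  · exact hm

theorem mem_iSup_iff (H : ∀ i, Subgroup (G i)) (x : CoprodI G) :
    x ∈ (⨆ i, (H i).map (of : G i →* CoprodI G)) ↔
      ∀ l ∈ (Word.equiv x).toList, l.2 ∈ H l.1 := by
  have hequiv : ∀ y : CoprodI G, Word.equiv y = y • Word.empty := fun _ => rfl
  constructor
  · intro hx
    rw [Subgroup.iSup_eq_closure] at hx
    induction hx using Subgroup.closure_induction_left with
    | one =>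
      intro l hl
      rw [hequiv, one_smul] at hl
      simp [Word.empty] at hl
    | mul_left x hx y hy ih =>
      simp only [Set.mem_iUnion, SetLike.mem_coe, Subgroup.mem_map] at hx
      obtain ⟨i, m, hm, rfl⟩ := hx
      intro l hl
      rw [hequiv, mul_smul, ← hequiv] at hl
      exact letters_step H hm ih l hl
    | inv_mul_cancel x hx y hy ih =>
      simp only [Set.mem_iUnion, SetLike.mem_coe, Subgroup.mem_map] at hx
      obtain ⟨i, m, hm, rfl⟩ := hx
      intro l hl
      rw [hequiv, ← map_inv, mul_smul, ← hequiv] at hl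
      exact letters_step H (inv_mem hm) ih l hl
  · intro h
    rw [← Word.equiv.symm_apply_apply x]
    show Word.prod (Word.equiv x) ∈ _
    rw [Word.prod]
    refine Subgroup.list_prod_mem _ ?_
    intro g hg
    obtain ⟨l, hl, rfl⟩ := List.mem_map.mp hg
    exact Subgroup.mem_iSup_of_mem l.1 (Subgroup.mem_map_of_mem of (h l hl))

end CoprodI

section Coprod

universe u v

variable {A : Type u} {B : Type v} [Group A] [Group B]

/-- The Bool-indexed family `true ↦ A`, `false ↦ B` (with `ULift` to equalize universes). -/
abbrev Fam (A : Type u) (B : Type v) : Bool → Type (max u v) :=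
  fun b => cond b (ULift.{v} A) (ULift.{u} B)

instance : ∀ b, Group (Fam A B b) := fun b => by cases b <;> dsimp [Fam] <;> infer_instance

def uA (A : Type u) [Group A] : ULift.{v} A ≃* A := MulEquiv.ulift
def uB (B : Type v) [Group B] : ULift.{u} B ≃* B := MulEquiv.ulift

def toC : A ∗ B →* CoprodI (Fam A B) :=
  Coprod.lift ((of (i := true)).comp (uA.{u,v} A).symm.toMonoidHom)
    ((of (i := false)).comp (uB.{u,v} B).symm.toMonoidHom)

def ofC : CoprodI (Fam A B) →* A ∗ B :=
  CoprodI.lift (fun b => match b with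
    | true => (Coprod.inl : A →* A ∗ B).comp (uA.{u,v} A).toMonoidHom
    | false => (Coprod.inr : B →* A ∗ B).comp (uB.{u,v} B).toMonoidHom)

theorem ofC_comp_toC : (ofC).comp (toC : A ∗ B →* _) = MonoidHom.id _ := by
  apply Coprod.hom_ext <;> ext x <;>
    simp only [MonoidHom.comp_apply, MonoidHom.id_apply, toC, ofC,
      Coprod.lift_apply_inl, Coprod.lift_apply_inr, MonoidHom.coe_comp,
      Function.comp_apply] <;>
    rw [CoprodI.lift_of] <;> simp

theorem toC_comp_ofC : (toC).comp (ofC : CoprodI (Fam A B) →* _) = MonoidHom.id _ := by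
  apply CoprodI.ext_hom
  intro b
  cases b <;> ext x <;>
    simp only [MonoidHom.comp_apply, MonoidHom.id_apply, ofC] <;>
    rw [CoprodI.lift_of] <;>
    simp [toC, Coprod.lift_apply_inl, Coprod.lift_apply_inr]

noncomputable def e : (A ∗ B) ≃* CoprodI (Fam A B) :=
  MonoidHom.toMulEquiv toC ofC ofC_comp_toC toC_comp_ofC

def HK (H : Subgroup A) (K : Subgroup B) : ∀ b, Subgroup (Fam A B b) := fun b =>
  match b with
  | true => H.comap (uA.{u,v} A).toMonoidHom
  | false => K.comap (uB.{u,v} B).toMonoidHom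

@[simp] theorem HK_true (H : Subgroup A) (K : Subgroup B) :
    HK H K true = H.comap (uA.{u,v} A).toMonoidHom := rfl
theorem map_uA (H : Subgroup A) :
    H.map (uA.{u,v} A).symm.toMonoidHom = H.comap (uA.{u,v} A).toMonoidHom := by
  ext a
  rw [Subgroup.mem_map_equiv]
  simp

theorem map_uB (K : Subgroup B) :
    K.map (uB.{u,v} B).symm.toMonoidHom = K.comap (uB.{u,v} B).toMonoidHom := by
  ext a
  rw [Subgroup.mem_map_equiv]
  simp

@[simp] theorem HK_false (H : Subgroup A) (K : Subgroup B) :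
    HK H K false = K.comap (uB.{u,v} B).toMonoidHom := rfl

variable [DecidableEq A] [DecidableEq B]

instance : ∀ b, DecidableEq (Fam A B b) := fun b => by cases b <;> dsimp [Fam] <;> infer_instance

theorem mem_sup_iff (H : Subgroup A) (K : Subgroup B) (x : A ∗ B) :
    x ∈ (H.map (Coprod.inl : A →* A ∗ B) ⊔ K.map (Coprod.inr : B →* A ∗ B)) ↔
      ∀ l ∈ (Word.equiv (toC x)).toList, l.2 ∈ HK H K l.1 := by
  have he : (e : (A ∗ B) ≃* CoprodI (Fam A B)).toMonoidHom = toC := rfl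
  have h1 : (H.map (Coprod.inl : A →* A ∗ B) ⊔ K.map Coprod.inr).map
      (e : (A ∗ B) ≃* CoprodI (Fam A B)).toMonoidHom
      = ⨆ b, ((HK H K b).map (of : Fam A B b →* _)) := by
    rw [Subgroup.map_sup, iSup_bool_eq, he, Subgroup.map_map, Subgroup.map_map,
      HK_true, HK_false]
    congr 1
    · rw [show (toC : A ∗ B →* _).comp Coprod.inl
          = (of (i := true)).comp (uA.{u,v} A).symm.toMonoidHom from rfl,
        ← Subgroup.map_map, map_uA]
    · rw [show (toC : A ∗ B →* _).comp Coprod.inr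
          = (of (i := false)).comp (uB.{u,v} B).symm.toMonoidHom from rfl,
        ← Subgroup.map_map, map_uB]
  have h2 : x ∈ (H.map (Coprod.inl : A →* A ∗ B) ⊔ K.map Coprod.inr) ↔
      e x ∈ (H.map (Coprod.inl : A →* A ∗ B) ⊔ K.map Coprod.inr).map
        (e : (A ∗ B) ≃* CoprodI (Fam A B)).toMonoidHom := by
    rw [Subgroup.mem_map_equiv, MulEquiv.symm_apply_apply]
  rw [h2, h1, mem_iSup_iff]
  rfl

theorem iInf_sup_eq {κ : Type*} (J : Set κ) (P : κ → Subgroup A) (Q : κ → Subgroup B) :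
    (⨅ j ∈ J, ((P j).map (Coprod.inl : A →* A ∗ B) ⊔ (Q j).map (Coprod.inr : B →* A ∗ B)))
      = (⨅ j ∈ J, P j).map (Coprod.inl : A →* A ∗ B)
        ⊔ (⨅ j ∈ J, Q j).map (Coprod.inr : B →* A ∗ B) := by
  ext x
  simp only [Subgroup.mem_iInf, mem_sup_iff]
  constructor
  · rintro h ⟨b, m⟩ hl
    cases b
    · simp only [HK_false, Subgroup.mem_comap, Subgroup.mem_iInf]
      exact fun j hj => by
        have := h j hj ⟨false, m⟩ hl
        simpa using this
    · simp only [HK_true, Subgroup.mem_comap, Subgroup.mem_iInf]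
      exact fun j hj => by
        have := h j hj ⟨true, m⟩ hl
        simpa using this
  · rintro h j hj ⟨b, m⟩ hl
    cases b
    · have := h ⟨false, m⟩ hl
      simp only [HK_false, Subgroup.mem_comap, Subgroup.mem_iInf] at this ⊢
      exact this j hj
    · have := h ⟨true, m⟩ hl
      simp only [HK_true, Subgroup.mem_comap, Subgroup.mem_iInf] at this ⊢
      exact this j hj

end Coprod

end Stmt10Aux


/-- In the free product `G = A ∗ B`, with `G_i = ⟨A_i, B⟩` for `i ∈ I_α` and
`G_i = ⟨A, B_i⟩` for `i ∈ I_β`, every parabolic subgroup satisfies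
`⋂_{j∈J} G_j = ⟨A_{J∩I_α}, B_{J∩I_β}⟩`. -/
theorem stmt_10 {A B : Type*} [Group A] [Group B]
    {Iα Iβ : Type*} [Fintype Iα] [Fintype Iβ]
    (Ai : Iα → Subgroup A) (Bi : Iβ → Subgroup B)
    (Gi : Iα ⊕ Iβ → Subgroup (A ∗ B))
    (hGα : ∀ i : Iα, Gi (Sum.inl i)
        = (Ai i).map (Monoid.Coprod.inl : A →* A ∗ B)
          ⊔ (⊤ : Subgroup B).map (Monoid.Coprod.inr : B →* A ∗ B))
    (hGβ : ∀ i : Iβ, Gi (Sum.inr i)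
        = (⊤ : Subgroup A).map (Monoid.Coprod.inl : A →* A ∗ B)
          ⊔ (Bi i).map (Monoid.Coprod.inr : B →* A ∗ B)) :
    ∀ J : Set (Iα ⊕ Iβ),
      (⨅ j ∈ J, Gi j)
        = (⨅ i ∈ {i : Iα | Sum.inl i ∈ J}, Ai i).map (Monoid.Coprod.inl : A →* A ∗ B)
          ⊔ (⨅ i ∈ {i : Iβ | Sum.inr i ∈ J}, Bi i).map (Monoid.Coprod.inr : B →* A ∗ B) := by
  classical
  intro J
  have hGi : ∀ j : Iα ⊕ Iβ, Gi j
      = (Sum.elim Ai (fun _ => (⊤ : Subgroup A)) j).map (Monoid.Coprod.inl : A →* A ∗ B)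
        ⊔ (Sum.elim (fun _ => (⊤ : Subgroup B)) Bi j).map (Monoid.Coprod.inr : B →* A ∗ B) := by
    rintro (i | i)
    · exact hGα i
    · exact hGβ i
  have hA : (⨅ j ∈ J, Sum.elim Ai (fun _ => (⊤ : Subgroup A)) j)
      = ⨅ i ∈ {i : Iα | Sum.inl i ∈ J}, Ai i := by
    apply le_antisymm
    · exact le_iInf₂ fun i hi => iInf₂_le (Sum.inl i) hi
    · refine le_iInf₂ fun j hj => ?_
      rcases j with i | i
      · exact iInf₂_le i hj
      · exact le_top
  have hB : (⨅ j ∈ J, Sum.elim (fun _ => (⊤ : Subgroup B)) Bi j)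
      = ⨅ i ∈ {i : Iβ | Sum.inr i ∈ J}, Bi i := by
    apply le_antisymm
    · exact le_iInf₂ fun i hi => iInf₂_le (Sum.inr i) hi
    · refine le_iInf₂ fun j hj => ?_
      rcases j with i | i
      · exact le_top
      · exact iInf₂_le i hj
  calc (⨅ j ∈ J, Gi j)
      = ⨅ j ∈ J, ((Sum.elim Ai (fun _ => (⊤ : Subgroup A)) j).map
            (Monoid.Coprod.inl : A →* A ∗ B)
          ⊔ (Sum.elim (fun _ => (⊤ : Subgroup B)) Bi j).map
            (Monoid.Coprod.inr : B →* A ∗ B)) :=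
        iInf_congr fun j => iInf_congr fun _ => hGi j
    _ = (⨅ j ∈ J, Sum.elim Ai (fun _ => (⊤ : Subgroup A)) j).map
            (Monoid.Coprod.inl : A →* A ∗ B)
          ⊔ (⨅ j ∈ J, Sum.elim (fun _ => (⊤ : Subgroup B)) Bi j).map
            (Monoid.Coprod.inr : B →* A ∗ B) := Stmt10Aux.iInf_sup_eq J _ _
    _ = _ := by rw [hA, hB]
end

section
/- Let G be a group flag-transitive on the coset incidence system (G, (G_i)_{i∈I}) in the sense that for all subsets J, H, K ⊆ I, (G_J G_H) ∩ (G_J G_K) = G_J (G_H ∩ G_K) where G_J = ⋂_{j∈J} G_j. Then for every nonempty J ⊆ I and every family (g_j)_{j∈J} of elements of G such that g_i G_i ∩ g_j G_j ≠ ∅ for all i, j ∈ J, there exists g ∈ G with ⋂_{j∈J} g_j G_j = g G_J. -/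
/-!
The product-intersection condition `AB ∩ AC ⊆ A(B ∩ C)` is exactly a Helly property for three
cosets: if `aB`, `bC`, `cA` pairwise meet, they have a common point. Now induct on finite
`t ⊆ J`, keeping the invariant that `⋂_{j ∈ t} g_j G_j` meets every `g_i G_i` with `i ∈ J`.
Once nonempty, that intersection is a coset `z G_t`, so adding `k` is the three-coset case
with `A = G_t`, `B = G_i`, `C = G_k`. Finally a nonempty intersection of cosets `g_j G_j`
is a coset of `G_J = ⋂ G_j`.
-/

open scoped Pointwise

namespace Subgroup

variable {G : Type*} [Group G]

theorem smul_inter_smul_inter_smul_nonempty {A B C : Subgroup G}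
    (h : ((A : Set G) * B) ∩ ((A : Set G) * C) ⊆ (A : Set G) * ↑(B ⊓ C)) {a b c : G}
    (hab : (a • (B : Set G) ∩ b • (C : Set G)).Nonempty)
    (hac : (a • (B : Set G) ∩ c • (A : Set G)).Nonempty)
    (hbc : (b • (C : Set G) ∩ c • (A : Set G)).Nonempty) :
    (a • (B : Set G) ∩ b • (C : Set G) ∩ c • (A : Set G)).Nonempty := by
  obtain ⟨w, hwB, hwC⟩ := hab
  obtain ⟨u, huB, huA⟩ := hac
  obtain ⟨v, hvC, hvA⟩ := hbc
  rw [mem_leftCoset_iff] at hwB hwC huB huA hvC hvA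
  -- `c⁻¹w = (c⁻¹u)(u⁻¹w) = (c⁻¹v)(v⁻¹w)` lies in both `AB` and `AC`.
  have hAB : c⁻¹ * w ∈ (A : Set G) * B :=
    ⟨c⁻¹ * u, huA, (a⁻¹ * u)⁻¹ * (a⁻¹ * w), mul_mem (inv_mem huB) hwB, by group⟩
  have hAC : c⁻¹ * w ∈ (A : Set G) * C :=
    ⟨c⁻¹ * v, hvA, (b⁻¹ * v)⁻¹ * (b⁻¹ * w), mul_mem (inv_mem hvC) hwC, by group⟩
  obtain ⟨p, hp, q, ⟨hqB, hqC⟩, hpq⟩ := h (Set.mem_inter hAB hAC)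
  have hpq : p * q = c⁻¹ * w := hpq
  refine ⟨w * q⁻¹, ⟨?_, ?_⟩, ?_⟩ <;> rw [mem_leftCoset_iff, ← mul_assoc]
  · exact mul_mem hwB (inv_mem hqB)
  · exact mul_mem hwC (inv_mem hqC)
  · rwa [← hpq, mul_inv_cancel_right]

theorem biInter_smul_eq_smul_biInf {I : Type*} (H : I → Subgroup G) (g : I → G) (S : Set I)
    {z : G} (hz : z ∈ ⋂ j ∈ S, g j • (H j : Set G)) :
    ⋂ j ∈ S, g j • (H j : Set G) = z • ((⨅ j ∈ S, H j : Subgroup G) : Set G) := by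
  simp only [coe_iInf, Set.smul_set_iInter]
  refine Set.iInter₂_congr fun j hj => (leftCoset_eq_iff (H j)).2 ?_
  exact (mem_leftCoset_iff _).1 (Set.mem_iInter₂.1 hz j hj)

theorem biInter_smul_nonempty {I : Type*} (H : I → Subgroup G) (g : I → G) {J : Set I}
    (hJfin : J.Finite) (hJ : J.Nonempty)
    (hH : ∀ t ⊆ J, ∀ i ∈ J, ∀ k ∈ J,
      (((⨅ j ∈ t, H j : Subgroup G) : Set G) * H i) ∩
        (((⨅ j ∈ t, H j : Subgroup G) : Set G) * H k)
        ⊆ ((⨅ j ∈ t, H j : Subgroup G) : Set G) * ↑(H i ⊓ H k))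
    (hg : ∀ i ∈ J, ∀ j ∈ J, (g i • (H i : Set G) ∩ g j • (H j : Set G)).Nonempty) :
    (⋂ j ∈ J, g j • (H j : Set G)).Nonempty := by
  suffices key : ∀ t ⊆ J, ∀ i ∈ J,
      (g i • (H i : Set G) ∩ ⋂ j ∈ t, g j • (H j : Set G)).Nonempty by
    obtain ⟨i, hi⟩ := hJ
    exact (key J le_rfl i hi).mono Set.inter_subset_right
  intro t htJ
  induction t, hJfin.subset htJ using Set.Finite.induction_on with
  | empty => exact fun i _ => ⟨g i, by simp [mem_leftCoset_iff]⟩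
  | @insert k t _ _ ih =>
    intro i hi
    obtain ⟨hk, htJ⟩ := Set.insert_subset_iff.1 htJ
    obtain ⟨z, -, hz⟩ := ih htJ k hk
    have hcoset := biInter_smul_eq_smul_biInf H g t hz
    have ih' : ∀ i ∈ J,
        (g i • (H i : Set G) ∩ z • ((⨅ j ∈ t, H j : Subgroup G) : Set G)).Nonempty :=
      hcoset ▸ ih htJ
    rw [Set.biInter_insert, hcoset, ← Set.inter_assoc]
    exact smul_inter_smul_inter_smul_nonempty (hH t htJ i hi k hk) (hg i hi k hk) (ih' i hi)
      (ih' k hk)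

end Subgroup

/-- If `G` is flag-transitive on `(G, (G_i)_{i∈I})` in the form
`(G_J G_H) ∩ (G_J G_K) = G_J (G_H ∩ G_K)`, then every family of pairwise incident
cosets `(g_j G_j)_{j∈J}` has intersection equal to a single coset `g G_J`. -/
theorem stmt_18 {G : Type*} [Group G] {I : Type*} [Fintype I]
    (Gi : I → Subgroup G)
    (GJ : Set I → Subgroup G)
    (hGJ : ∀ J : Set I, GJ J = ⨅ j ∈ J, Gi j)
    (hFT : ∀ J H K : Set I,
      (((GJ J : Set G) * (GJ H : Set G)) ∩ ((GJ J : Set G) * (GJ K : Set G)))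
        = (GJ J : Set G) * ((GJ H ⊓ GJ K : Subgroup G) : Set G))
    (J : Set I) (hJ : J.Nonempty) (g : I → G)
    (hg : ∀ i ∈ J, ∀ j ∈ J,
      ((g i • (Gi i : Set G)) ∩ (g j • (Gi j : Set G))).Nonempty) :
    ∃ x : G, (⋂ j ∈ J, g j • (Gi j : Set G)) = x • (GJ J : Set G) := by
  have hsingleton (i : I) : GJ {i} = Gi i := by simp [hGJ]
  have hH : ∀ t ⊆ J, ∀ i ∈ J, ∀ k ∈ J,
      (((⨅ j ∈ t, Gi j : Subgroup G) : Set G) * Gi i) ∩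
        (((⨅ j ∈ t, Gi j : Subgroup G) : Set G) * Gi k)
        ⊆ ((⨅ j ∈ t, Gi j : Subgroup G) : Set G) * ↑(Gi i ⊓ Gi k) := by
    intro t _ i _ k _
    have := (hFT t {i} {k}).le
    rwa [hGJ t, hsingleton, hsingleton] at this
  obtain ⟨z, hz⟩ := Subgroup.biInter_smul_nonempty Gi g J.toFinite hJ hH hg
  exact ⟨z, by rw [Subgroup.biInter_smul_eq_smul_biInf Gi g J hz, hGJ]⟩
end
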